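/- Let p be a prime and n ≥ 1. Let W_p^n be the set of words a_1…a_n over the alphabet {0,1,…,p^2−1} for which there exist indices 1 ≤ j < k ≤ n+1 (k = n+1 allowed) with: a_i = 0 for i < j; a_j = 1; a_i ∈ {0,…,p−1} for j < i < k; if k ≤ n then a_k ∈ {p, 2p, …, (p−1)p}; and a_i ∈ {0,…,p^2−1} arbitrary for i > k. Together with the all-zero word, the set {0-word} ∪ W_p^n is in bijection with the set of orbits of SL(2, ZMod p) acting by left multiplication on 2×n matrices over ZMod p. -/

import Mathlib

/-!
`SL(2, F)` acts on a `2 × n` matrix column by column. Every orbit contains exactly one matrix in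
normal form: either zero, or its first nonzero column is `e₁` (`SL(2, F)` is transitive on
nonzero vectors) and its first column off the line `F e₁` is a multiple of `e₂` (reached by a
transvection fixing `e₁`). Uniqueness: an element of `SL(2, F)` carrying one normal form to
another fixes `e₁`, so it is a transvection `e₂ ↦ e₂ + b e₁`, and comparing the first column off
`F e₁` forces `b = 0`. Writing each letter as `u + v p`, the letter `1` is the column `e₁`, the
letters below `p` are the columns on `F e₁`, and the letters `m p` (`0 < m < p`) are the nonzero
multiples of `e₂`; so the normal forms are exactly the images of the zero word and of `W_p^n`.
-/

/-- The orbit of a `2 × n` matrix over `ZMod p` under left multiplication by `SL(2, ZMod p)`. -/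
def slOrbit (p n : ℕ) (M : Matrix (Fin 2) (Fin n) (ZMod p)) :
    Set (Matrix (Fin 2) (Fin n) (ZMod p)) :=
  { N | ∃ S : Matrix.SpecialLinearGroup (Fin 2) (ZMod p),
      (S : Matrix (Fin 2) (Fin 2) (ZMod p)) * M = N }

/-- The defining condition of the language `W_p^n` (0-based indices; `k = n` means that
no letter of the form `(R4)` occurs within the word). -/
def IsWordP (p n : ℕ) (a : Fin n → Fin (p ^ 2)) : Prop :=
  ∃ j k : ℕ, j < k ∧ k ≤ n ∧ ∃ hj : j < n,
    (∀ i : Fin n, (i : ℕ) < j → (a i : ℕ) = 0) ∧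
    (a ⟨j, hj⟩ : ℕ) = 1 ∧
    (∀ i : Fin n, j < (i : ℕ) → (i : ℕ) < k → (a i : ℕ) < p) ∧
    (∀ hk : k < n, ∃ m : ℕ, 1 ≤ m ∧ m < p ∧ (a ⟨k, hk⟩ : ℕ) = m * p)

/-- The `2 × n` matrix over `ZMod p` associated to a word: the `i`-th letter `a i = u + v·p`
is sent to the column `(u, v)ᵗ`. -/
def wordMatrix (p n : ℕ) (a : Fin n → Fin (p ^ 2)) : Matrix (Fin 2) (Fin n) (ZMod p) :=
  Matrix.of fun i j => if i = 0 then ((a j : ℕ) % p : ZMod p) else ((a j : ℕ) / p : ZMod p)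

open Matrix
open scoped MatrixGroups

variable {K ι : Type*}

lemma forall_eq_zero_or_exists_isLeast_ne_zero [LinearOrder ι] [WellFoundedLT ι] {A : Type*}
    [Zero A] (f : ι → A) : (∀ i, f i = 0) ∨ ∃ j, IsLeast {i | f i ≠ 0} j := by
  obtain hf | hf := {i | f i ≠ 0}.eq_empty_or_nonempty
  · exact Or.inl fun i => not_not.1 (Set.eq_empty_iff_forall_notMem.1 hf i)
  · exact Or.inr ⟨_, wellFounded_lt.min_mem _ hf, fun _ hx => wellFounded_lt.min_le hx⟩

lemma transpose_mul_apply_eq_mulVec {m : Type*} [Fintype m] [CommSemiring K]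
    (S : Matrix m m K) (M : Matrix m ι K) (i : ι) : (S * M)ᵀ i = S *ᵥ Mᵀ i := by
  ext r
  simp [mul_apply, mulVec, dotProduct]

lemma Matrix.SpecialLinearGroup.mulVec_eq_zero_iff {m : Type*} [Fintype m] [DecidableEq m]
    [CommRing K] (S : SpecialLinearGroup m K) {v : m → K} : (S : Matrix m m K) *ᵥ v = 0 ↔ v = 0 :=
  (mulVec_injective_of_isUnit ((isUnit_iff_isUnit_det _).2 (by simp))).eq_iff' (mulVec_zero _)

lemma Matrix.SpecialLinearGroup.setOf_transpose_mul_ne_zero {m : Type*} [Fintype m] [DecidableEq m]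
    [CommRing K] (S : SpecialLinearGroup m K) (M : Matrix m ι K) :
    {i | ((S : Matrix m m K) * M)ᵀ i ≠ 0} = {i | Mᵀ i ≠ 0} := by
  simp only [transpose_mul_apply_eq_mulVec, ne_eq, SpecialLinearGroup.mulVec_eq_zero_iff]

lemma SL2_eq_transvection_of_mulVec_eq [CommRing K] (S : SL(2, K))
    (hS : (S : Matrix (Fin 2) (Fin 2) K) *ᵥ ![1, 0] = ![1, 0]) :
    ∃ b, S = SpecialLinearGroup.transvection (zero_ne_one : (0 : Fin 2) ≠ 1) b := by
  have h00 : S 0 0 = 1 := by simpa [mulVec, dotProduct] using congrFun hS 0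
  have h10 : S 1 0 = 0 := by simpa [mulVec, dotProduct] using congrFun hS 1
  have h11 : S 1 1 = 1 := by
    have hdet := S.det_coe
    rwa [det_fin_two, h00, h10, one_mul, mul_zero, sub_zero] at hdet
  refine ⟨S 0 1, Subtype.ext ?_⟩
  ext r c
  fin_cases r <;> fin_cases c <;> simp [SpecialLinearGroup.transvection_coe, h00, h10, h11]

lemma exists_SL2_mulVec_eq [Field K] {c : Fin 2 → K} (hc : c ≠ 0) :
    ∃ S : SL(2, K), (S : Matrix (Fin 2) (Fin 2) K) *ᵥ c = ![1, 0] := by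
  obtain ⟨x, y, hxy⟩ : ∃ x y : K, x * c 0 + y * c 1 = 1 := by
    by_cases h0 : c 0 = 0
    · have h1 : c 1 ≠ 0 := fun h1 => hc (funext (Fin.forall_fin_two.2 ⟨h0, h1⟩))
      exact ⟨0, (c 1)⁻¹, by simp [h1]⟩
    · exact ⟨(c 0)⁻¹, 0, by simp [h0]⟩
  refine ⟨⟨!![x, y; -c 1, c 0], by simpa [det_fin_two] using hxy⟩, ?_⟩
  ext r
  fin_cases r <;> simp [mulVec, dotProduct, hxy, mul_comm]

section Transvection

variable [CommRing K] (b : K) (M : Matrix (Fin 2) ι K) (i : ι)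

lemma transvection_zero_one_mul_apply_zero :
    ((SpecialLinearGroup.transvection (zero_ne_one : (0 : Fin 2) ≠ 1) b : Matrix (Fin 2) (Fin 2) K)
      * M) 0 i = M 0 i + b * M 1 i :=
  transvection_mul_apply_same _ _ _ _ _

lemma transvection_zero_one_mul_apply_one :
    ((SpecialLinearGroup.transvection (zero_ne_one : (0 : Fin 2) ≠ 1) b : Matrix (Fin 2) (Fin 2) K)
      * M) 1 i = M 1 i :=
  transvection_mul_apply_of_ne _ _ _ _ one_ne_zero _ _

end Transvection

section NormalForm

variable [LinearOrder ι]

def IsSL2NormalForm [Zero K] [One K] (M : Matrix (Fin 2) ι K) : Prop :=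
  (∀ j, IsLeast {i | Mᵀ i ≠ 0} j → Mᵀ j = ![1, 0]) ∧
    ∀ k, IsLeast {i | M 1 i ≠ 0} k → M 0 k = 0

section WellFounded

variable [WellFoundedLT ι]

lemma IsSL2NormalForm.SL2_mul_eq_self [CommRing K] [NoZeroDivisors K] {M : Matrix (Fin 2) ι K}
    (hM : IsSL2NormalForm M) {S : SL(2, K)}
    (hSM : IsSL2NormalForm ((S : Matrix (Fin 2) (Fin 2) K) * M)) :
    (S : Matrix (Fin 2) (Fin 2) K) * M = M := by
  obtain hcols | ⟨j, hj⟩ := forall_eq_zero_or_exists_isLeast_ne_zero Mᵀ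
  · rw [transpose_eq_zero.1 (funext hcols), Matrix.mul_zero]
  obtain ⟨b, rfl⟩ := SL2_eq_transvection_of_mulVec_eq S <| by
    have h := hSM.1 j (by rwa [SpecialLinearGroup.setOf_transpose_mul_ne_zero])
    rwa [transpose_mul_apply_eq_mulVec, hM.1 j hj] at h
  obtain hrow | ⟨k, hk⟩ := forall_eq_zero_or_exists_isLeast_ne_zero (M 1)
  · ext r i
    fin_cases r
    · simp [transvection_zero_one_mul_apply_zero, hrow]
    · exact transvection_zero_one_mul_apply_one _ _ _
  · have hb : b * M 1 k = 0 := by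
      have h := hSM.2 k (by simpa only [transvection_zero_one_mul_apply_one] using hk)
      rwa [transvection_zero_one_mul_apply_zero, hM.2 k hk, zero_add] at h
    rw [(mul_eq_zero.1 hb).resolve_right hk.1, SpecialLinearGroup.transvection_coeff_zero,
      Matrix.SpecialLinearGroup.coe_one, Matrix.one_mul]

lemma exists_SL2_mul_pivot_eq [Field K] (M : Matrix (Fin 2) ι K) :
    ∃ S : SL(2, K), ∀ j, IsLeast {i | ((S : Matrix (Fin 2) (Fin 2) K) * M)ᵀ i ≠ 0} j →
      ((S : Matrix (Fin 2) (Fin 2) K) * M)ᵀ j = ![1, 0] := by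
  obtain hcols | ⟨j, hj⟩ := forall_eq_zero_or_exists_isLeast_ne_zero Mᵀ
  · refine ⟨1, fun j hj => ?_⟩
    rw [SpecialLinearGroup.setOf_transpose_mul_ne_zero] at hj
    exact (hj.1 (hcols j)).elim
  · obtain ⟨S, hS⟩ := exists_SL2_mulVec_eq hj.1
    refine ⟨S, fun j' hj' => ?_⟩
    rw [SpecialLinearGroup.setOf_transpose_mul_ne_zero] at hj'
    rw [transpose_mul_apply_eq_mulVec, ← hj.unique hj', hS]

lemma exists_SL2_mul_isSL2NormalForm_of_pivot_eq [Field K]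
    {M : Matrix (Fin 2) ι K} (hM : ∀ j, IsLeast {i | Mᵀ i ≠ 0} j → Mᵀ j = ![1, 0]) :
    ∃ S : SL(2, K), IsSL2NormalForm ((S : Matrix (Fin 2) (Fin 2) K) * M) := by
  obtain hrow | ⟨k, hk⟩ := forall_eq_zero_or_exists_isLeast_ne_zero (M 1)
  · refine ⟨1, ?_⟩
    rw [Matrix.SpecialLinearGroup.coe_one, Matrix.one_mul]
    exact ⟨hM, fun k hk => (hk.1 (hrow k)).elim⟩
  · refine ⟨SpecialLinearGroup.transvection zero_ne_one (-(M 0 k / M 1 k)), fun j hj => ?_,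
      fun k' hk' => ?_⟩
    · rw [SpecialLinearGroup.setOf_transpose_mul_ne_zero] at hj
      rw [transpose_mul_apply_eq_mulVec, hM j hj]
      ext r
      fin_cases r <;> simp [SpecialLinearGroup.transvection_coe]
    · simp only [transvection_zero_one_mul_apply_one] at hk'
      rw [hk'.unique hk, transvection_zero_one_mul_apply_zero, neg_mul, div_mul_cancel₀ _ hk.1, add_neg_cancel]

lemma exists_SL2_mul_isSL2NormalForm [Field K] (M : Matrix (Fin 2) ι K) :
    ∃ S : SL(2, K), IsSL2NormalForm ((S : Matrix (Fin 2) (Fin 2) K) * M) := by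
  obtain ⟨S₁, hS₁⟩ := exists_SL2_mul_pivot_eq M
  obtain ⟨S₂, hS₂⟩ := exists_SL2_mul_isSL2NormalForm_of_pivot_eq hS₁
  exact ⟨S₂ * S₁, by rwa [Matrix.SpecialLinearGroup.coe_mul, Matrix.mul_assoc]⟩

end WellFounded

lemma isSL2NormalForm_iff_pivots [Zero K] [One K] [NeZero (1 : K)] {n : ℕ}
    (M : Matrix (Fin 2) (Fin n) K) :
    IsSL2NormalForm M ↔ (∀ i, Mᵀ i = 0) ∨ ∃ j k : ℕ, j < k ∧ k ≤ n ∧ ∃ hj : j < n,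
      (∀ i : Fin n, (i : ℕ) < j → Mᵀ i = 0) ∧ Mᵀ ⟨j, hj⟩ = ![1, 0] ∧
      (∀ i : Fin n, j < (i : ℕ) → (i : ℕ) < k → M 1 i = 0) ∧
      ∀ hk : k < n, M 0 ⟨k, hk⟩ = 0 ∧ M 1 ⟨k, hk⟩ ≠ 0 := by
  constructor
  · intro hM
    obtain hcols | ⟨j, hj⟩ := forall_eq_zero_or_exists_isLeast_ne_zero Mᵀ
    · exact Or.inl hcols
    have hbelow : ∀ i : Fin n, i < j → Mᵀ i = 0 := fun i hi =>
      not_not.1 fun h => (hj.2 h).not_gt hi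
    have hpivot := hM.1 j hj
    have hrow_le : ∀ i, i ≤ j → M 1 i = 0 := fun i hi => by
      obtain hi | rfl := hi.lt_or_eq
      · exact congrFun (hbelow i hi) 1
      · simpa using congrFun hpivot 1
    obtain hrow | ⟨k, hk⟩ := forall_eq_zero_or_exists_isLeast_ne_zero (M 1)
    · exact Or.inr ⟨j, n, j.2, le_rfl, j.2, hbelow, hpivot, fun i _ _ => hrow i,
        fun h => (lt_irrefl n h).elim⟩
    · have hjk : j < k := lt_of_not_ge fun h => hk.1 (hrow_le k h)
      exact Or.inr ⟨j, k, hjk, k.2.le, j.2, hbelow, hpivot,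
        fun i _ hik => not_not.1 fun h => (hk.2 h).not_gt hik, fun _ => ⟨hM.2 k hk, hk.1⟩⟩
  · rintro (hzero | ⟨j, k, hjk, hkn, hj, hbelow, hpivot, hmid, hk⟩)
    · exact ⟨fun j hj => (hj.1 (hzero j)).elim, fun k hk => (hk.1 (congrFun (hzero k) 1)).elim⟩
    have hjl : IsLeast {i | Mᵀ i ≠ 0} ⟨j, hj⟩ :=
      ⟨by simp [hpivot], fun i hi => not_lt.1 fun h => hi (hbelow i h)⟩
    have hrow : ∀ i : Fin n, (i : ℕ) < k → M 1 i = 0 := by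
      intro i hik
      rcases lt_trichotomy (i : ℕ) j with h | h | h
      · exact congrFun (hbelow i h) 1
      · simpa [show i = ⟨j, hj⟩ from Fin.ext h] using congrFun hpivot 1
      · exact hmid i h hik
    refine ⟨fun j' hj' => hjl.unique hj' ▸ hpivot, fun k' hk' => ?_⟩
    have hkn : k < n := lt_of_le_of_ne hkn fun h => hk'.1 (hrow k' (h ▸ k'.2))
    have hkl : IsLeast {i | M 1 i ≠ 0} ⟨k, hkn⟩ :=
      ⟨(hk hkn).2, fun i hi => not_lt.1 fun h => hi (hrow i h)⟩
    rw [hk'.unique hkl]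
    exact (hk hkn).1

end NormalForm

section Words

variable {p n : ℕ}

lemma natCast_zmod_inj_of_lt {x y : ℕ} (hx : x < p) (hy : y < p) :
    (x : ZMod p) = y ↔ x = y := by
  rw [ZMod.natCast_eq_natCast_iff', Nat.mod_eq_of_lt hx, Nat.mod_eq_of_lt hy]

lemma div_lt_of_lt_sq {x : ℕ} (hx : x < p ^ 2) : x / p < p :=
  Nat.div_lt_of_lt_mul (by rwa [sq] at hx)

@[simp] lemma wordMatrix_apply_zero (a : Fin n → Fin (p ^ 2)) (i : Fin n) :
    wordMatrix p n a 0 i = ((a i : ℕ) % p : ℕ) := rfl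

@[simp] lemma wordMatrix_apply_one (a : Fin n → Fin (p ^ 2)) (i : Fin n) :
    wordMatrix p n a 1 i = ((a i : ℕ) / p : ℕ) := rfl

lemma wordMatrix_injective [NeZero p] : Function.Injective (wordMatrix p n) := by
  intro a b hab
  funext i
  have hmod := congrFun (congrFun hab 0) i
  have hdiv := congrFun (congrFun hab 1) i
  rw [wordMatrix_apply_zero, wordMatrix_apply_zero,
    natCast_zmod_inj_of_lt (Nat.mod_lt _ (NeZero.pos p)) (Nat.mod_lt _ (NeZero.pos p))] at hmod
  rw [wordMatrix_apply_one, wordMatrix_apply_one,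
    natCast_zmod_inj_of_lt (div_lt_of_lt_sq (a i).2) (div_lt_of_lt_sq (b i).2)] at hdiv
  exact Fin.ext (by rw [← Nat.div_add_mod (a i) p, ← Nat.div_add_mod (b i) p, hmod, hdiv])

lemma wordMatrix_bijective [NeZero p] : Function.Bijective (wordMatrix p n) := by
  refine wordMatrix_injective.bijective_of_nat_card_le (le_of_eq ?_)
  change Nat.card (Fin 2 → Fin n → ZMod p) = _
  simp only [Nat.card_eq_fintype_card, Fintype.card_pi, ZMod.card, Finset.prod_const,
    Finset.card_univ, Fintype.card_fin]
  ring

lemma wordMatrix_apply_zero_eq_zero_iff [NeZero p] (a : Fin n → Fin (p ^ 2)) (i : Fin n) :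
    wordMatrix p n a 0 i = 0 ↔ (a i : ℕ) % p = 0 := by
  simpa using natCast_zmod_inj_of_lt (Nat.mod_lt _ (NeZero.pos p)) (NeZero.pos p)

lemma wordMatrix_apply_one_eq_zero_iff [NeZero p] (a : Fin n → Fin (p ^ 2)) (i : Fin n) :
    wordMatrix p n a 1 i = 0 ↔ (a i : ℕ) < p := by
  rw [← Nat.div_eq_zero_iff_lt (NeZero.pos p)]
  simpa using natCast_zmod_inj_of_lt (div_lt_of_lt_sq (a i).2) (NeZero.pos p)

lemma wordMatrix_transpose_eq_zero_iff [NeZero p] (a : Fin n → Fin (p ^ 2)) (i : Fin n) :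
    (wordMatrix p n a)ᵀ i = 0 ↔ (a i : ℕ) = 0 := by
  simp only [funext_iff, Fin.forall_fin_two, transpose_apply, Pi.zero_apply,
    wordMatrix_apply_zero_eq_zero_iff, wordMatrix_apply_one_eq_zero_iff]
  constructor
  · rintro ⟨hmod, hlt⟩
    rwa [Nat.mod_eq_of_lt hlt] at hmod
  · intro h
    simp [h, NeZero.pos p]

lemma wordMatrix_transpose_eq_iff_eq_one (hp : 1 < p) (a : Fin n → Fin (p ^ 2)) (i : Fin n) :
    (wordMatrix p n a)ᵀ i = ![1, 0] ↔ (a i : ℕ) = 1 := by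
  have : NeZero p := ⟨by omega⟩
  have hmod : wordMatrix p n a 0 i = 1 ↔ (a i : ℕ) % p = 1 := by
    simpa using natCast_zmod_inj_of_lt (Nat.mod_lt _ (NeZero.pos p)) hp
  simp only [funext_iff, Fin.forall_fin_two, transpose_apply, cons_val_zero, cons_val_one,
    hmod, wordMatrix_apply_one_eq_zero_iff]
  constructor
  · rintro ⟨hmod, hlt⟩
    rwa [Nat.mod_eq_of_lt hlt] at hmod
  · intro h
    simp [h, Nat.mod_eq_of_lt hp, hp]

lemma wordMatrix_apply_zero_eq_zero_and_ne_zero_iff [NeZero p] (a : Fin n → Fin (p ^ 2))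
    (i : Fin n) :
    (wordMatrix p n a 0 i = 0 ∧ wordMatrix p n a 1 i ≠ 0) ↔
      ∃ m, 1 ≤ m ∧ m < p ∧ (a i : ℕ) = m * p := by
  rw [wordMatrix_apply_zero_eq_zero_iff, ne_eq, wordMatrix_apply_one_eq_zero_iff, not_lt]
  constructor
  · rintro ⟨hmod, hle⟩
    exact ⟨(a i : ℕ) / p, (Nat.one_le_div_iff (NeZero.pos p)).2 hle, div_lt_of_lt_sq (a i).2,
      (Nat.div_mul_cancel (Nat.dvd_of_mod_eq_zero hmod)).symm⟩
  · rintro ⟨m, hm1, -, ha⟩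
    rw [ha]
    exact ⟨Nat.mul_mod_left m p, Nat.le_mul_of_pos_left p hm1⟩

lemma zero_or_isWordP_iff_isSL2NormalForm (hp : 1 < p) (a : Fin n → Fin (p ^ 2)) :
    ((∀ i, (a i : ℕ) = 0) ∨ IsWordP p n a) ↔ IsSL2NormalForm (wordMatrix p n a) := by
  have : NeZero p := ⟨by omega⟩
  have : Fact (1 < p) := ⟨hp⟩
  rw [isSL2NormalForm_iff_pivots]
  simp only [IsWordP, wordMatrix_transpose_eq_zero_iff, wordMatrix_transpose_eq_iff_eq_one hp,
    wordMatrix_apply_one_eq_zero_iff, wordMatrix_apply_zero_eq_zero_and_ne_zero_iff]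

end Words

lemma slOrbit_mul {p n : ℕ} (S : SL(2, ZMod p)) (M : Matrix (Fin 2) (Fin n) (ZMod p)) :
    slOrbit p n ((S : Matrix (Fin 2) (Fin 2) (ZMod p)) * M) = slOrbit p n M := by
  ext N
  constructor
  · rintro ⟨T, rfl⟩
    exact ⟨T * S, by rw [Matrix.SpecialLinearGroup.coe_mul, Matrix.mul_assoc]⟩
  · rintro ⟨T, rfl⟩
    exact ⟨T * S⁻¹, by rw [← Matrix.mul_assoc, ← Matrix.SpecialLinearGroup.coe_mul,
      inv_mul_cancel_right]⟩

lemma mem_slOrbit_self {p n : ℕ} (M : Matrix (Fin 2) (Fin n) (ZMod p)) : M ∈ slOrbit p n M :=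
  ⟨1, by rw [Matrix.SpecialLinearGroup.coe_one, Matrix.one_mul]⟩

theorem words_biject_orbits_general (p n : ℕ) (hp : p.Prime) :
    Function.Bijective
      (fun w : { a : Fin n → Fin (p ^ 2) // (∀ i, (a i : ℕ) = 0) ∨ IsWordP p n a } =>
        (⟨slOrbit p n (wordMatrix p n w.1), ⟨wordMatrix p n w.1, rfl⟩⟩ :
          { O : Set (Matrix (Fin 2) (Fin n) (ZMod p)) // ∃ M, O = slOrbit p n M })) := by
  have : Fact p.Prime := ⟨hp⟩
  have hvalid := zero_or_isWordP_iff_isSL2NormalForm (n := n) hp.one_lt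
  constructor
  · rintro ⟨a, ha⟩ ⟨b, hb⟩ hab
    have hab : slOrbit p n (wordMatrix p n a) = slOrbit p n (wordMatrix p n b) :=
      congrArg Subtype.val hab
    obtain ⟨S, hS⟩ : wordMatrix p n b ∈ slOrbit p n (wordMatrix p n a) :=
      hab ▸ mem_slOrbit_self _
    have hnormal := ((hvalid a).1 ha).SL2_mul_eq_self (S := S) (hS ▸ (hvalid b).1 hb)
    exact Subtype.ext (wordMatrix_injective (hnormal.symm.trans hS))
  · rintro ⟨_, M, rfl⟩
    obtain ⟨S, hS⟩ := exists_SL2_mul_isSL2NormalForm M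
    obtain ⟨a, ha⟩ := wordMatrix_bijective.2 ((S : Matrix (Fin 2) (Fin 2) (ZMod p)) * M)
    exact ⟨⟨a, (hvalid a).2 (ha ▸ hS)⟩, Subtype.ext (by simp only [ha, slOrbit_mul])⟩

theorem words_biject_orbits (p n : ℕ) (hp : p.Prime) (hn : 1 ≤ n) :
    Function.Bijective
      (fun w : { a : Fin n → Fin (p ^ 2) // (∀ i, (a i : ℕ) = 0) ∨ IsWordP p n a } =>
        (⟨slOrbit p n (wordMatrix p n w.1), ⟨wordMatrix p n w.1, rfl⟩⟩ :
          { O : Set (Matrix (Fin 2) (Fin n) (ZMod p)) // ∃ M, O = slOrbit p n M })) :=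
  words_biject_orbits_general p n hp
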